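/- arXiv:1601.05383 — 3 statements merged into one kernel-verified Lean document; each statement's English description precedes it below -/
import Mathlib

section
/- Let A be a commutative ring and B a commutative A-algebra. Let φ : B → A be an A-linear map such that the induced map B → Hom_A(B, A), x ↦ (y ↦ φ(x·y)), is bijective (i.e. φ determines a B-linear nondegenerate quadratic form q : B ≅ Hom_A(B, A) with q(x)(y) = φ(x·y)). Then for every ideal I of B, the orthogonal I^⊥ = {x ∈ B : φ(x·y) = 0 for all y ∈ I} of I with respect to this form is equal to the annihilator Ann_B(I) = {x ∈ B : x·y = 0 for all y ∈ I}. -/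
section Nondegenerate

variable {A B : Type*} [CommSemiring A] [CommSemiring B] [Algebra A B] {φ : B →ₗ[A] A}

theorem eq_zero_of_forall_map_mul_eq_zero
    (hφ : Function.Injective fun x : B => φ ∘ₗ LinearMap.mul A B x) {z : B}
    (hz : ∀ w, φ (z * w) = 0) : z = 0 :=
  hφ <| LinearMap.ext fun w => by simp [hz w]

theorem forall_map_mul_eq_zero_iff_forall_mul_eq_zero
    (hφ : Function.Injective fun x : B => φ ∘ₗ LinearMap.mul A B x) (I : Ideal B) (x : B) :
    (∀ y ∈ I, φ (x * y) = 0) ↔ (∀ y ∈ I, x * y = 0) := by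
  refine ⟨fun hx y hy => eq_zero_of_forall_map_mul_eq_zero hφ fun w => ?_,
    fun hx y hy => by rw [hx y hy, map_zero]⟩
  rw [mul_assoc]
  exact hx _ (I.mul_mem_right w hy)

end Nondegenerate

/-- **Sublemma (NilpLagr).** Let `B` be a commutative `A`-algebra and `φ : B → A` an
`A`-linear map such that `x ↦ (y ↦ φ (x * y))` is a bijection `B ≃ Hom_A(B, A)`
(i.e. `φ` defines a `B`-linear nondegenerate quadratic form on `B` over `A`).
Then for every ideal `I ⊆ B`, the orthogonal of `I` with respect to this form
coincides with the annihilator of `I` in `B`. -/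
theorem orthogonal_eq_annihilator_of_nondegenerate
    (A B : Type*) [CommRing A] [CommRing B] [Algebra A B]
    (φ : B →ₗ[A] A)
    (hq : Function.Bijective fun x : B => φ ∘ₗ (LinearMap.mul A B x)) :
    ∀ (I : Ideal B) (x : B), (∀ y ∈ I, φ (x * y) = 0) ↔ (∀ y ∈ I, x * y = 0) :=
  forall_map_mul_eq_zero_iff_forall_mul_eq_zero hq.injective
end

section
/- Let A be a commutative Noetherian ring, R a commutative A-algebra, and M an R-module which is finitely generated as an A-module. Then the quotient ring R / Ann_R(M) is finitely generated as an A-module. -/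
/-!
`R ⧸ Ann_R(M)` embeds `A`-linearly into `End_A(M)` through the action of `R` on `M`, and
`End_A(M)` is a finitely generated module over the Noetherian ring `A`, hence so is every
submodule of it.
-/

theorem Algebra.ker_lsmul_eq_annihilator (A R M : Type*) [CommSemiring A] [CommSemiring R]
    [Algebra A R] [AddCommMonoid M] [Module R M] [Module A M] [IsScalarTower A R M] :
    RingHom.ker (Algebra.lsmul A A M : R →ₐ[A] Module.End A M) = Module.annihilator R M := by
  ext r
  simp [Module.mem_annihilator, LinearMap.ext_iff]

/-- Let `A` be a commutative Noetherian ring, `R` a commutative `A`-algebra, and `M` an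
`R`-module which is finitely generated as an `A`-module.  Then `R / Ann_R(M)` is finitely
generated as an `A`-module. -/
theorem quotient_annihilator_finite_over_noetherian_base
    (A R M : Type*) [CommRing A] [IsNoetherianRing A] [CommRing R] [Algebra A R]
    [AddCommGroup M] [Module R M] [Module A M] [IsScalarTower A R M]
    [Module.Finite A M] :
    Module.Finite A (R ⧸ Module.annihilator R M) := by
  let φ : R →ₐ[A] Module.End A M := Algebra.lsmul A A M
  rw [← Algebra.ker_lsmul_eq_annihilator A R M]
  exact Module.Finite.of_injective (Ideal.kerLiftAlg φ).toLinearMap (Ideal.kerLiftAlg_injective φ)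
end

section
/- Let C be a category with zero morphisms, S : C → C a functor, and p : Id_C → S, s₀ : S → Id_C, s₁ : S → Id_C natural transformations such that s₀_X ∘ p_X = id_X and s₁_X ∘ p_X = id_X for every object X. Suppose A is an S-invariant object, i.e. p_A : A → S(A) is an isomorphism, and B is an S-contractable object, i.e. there exists a morphism h : B → S(B) with s₀_B ∘ h = id_B and s₁_B ∘ h = 0. Then every morphism f : B → A is zero. -/
open CategoryTheory

/-! `s₀` and `s₁` are both left inverse to the isomorphism `p_A`, hence agree at `A`. By naturality
every `f : B ⟶ A` then satisfies `s₀_B ≫ f = s₁_B ≫ f`; precomposing with the contraction `h`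
gives `f = (h ≫ s₀_B) ≫ f = (h ≫ s₁_B) ≫ f = 0`. -/

lemma CategoryTheory.NatTrans.app_comp_map_eq_of_app_eq {C D : Type*} [Category C] [Category D]
    {F G : C ⥤ D} (α β : F ⟶ G) {X Y : C} (f : X ⟶ Y) (hY : α.app Y = β.app Y) :
    α.app X ≫ G.map f = β.app X ≫ G.map f := by
  rw [← α.naturality, hY, β.naturality]

/-- Semi-orthogonality of `S`-contractable and `S`-invariant objects: given an
endofunctor `S` with natural transformations `p : Id ⟶ S`, `s₀ s₁ : S ⟶ Id` satisfying
`s₀ ∘ p = id` and `s₁ ∘ p = id`, if `A` is `S`-invariant (`p_A` is an isomorphism) and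
`B` is `S`-contractable (there is `h : B ⟶ S B` with `s₀ ∘ h = id` and `s₁ ∘ h = 0`),
then every morphism `B ⟶ A` is zero. -/
theorem hom_contractable_to_invariant_eq_zero
    {C : Type*} [Category C] [Limits.HasZeroMorphisms C]
    (S : C ⥤ C) (p : 𝟭 C ⟶ S) (s₀ s₁ : S ⟶ 𝟭 C)
    (hp0 : ∀ X : C, p.app X ≫ s₀.app X = 𝟙 X)
    (hp1 : ∀ X : C, p.app X ≫ s₁.app X = 𝟙 X)
    (A B : C) (hA : IsIso (p.app A))
    (h : B ⟶ S.obj B) (h0 : h ≫ s₀.app B = 𝟙 B) (h1 : h ≫ s₁.app B = 0)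
    (f : B ⟶ A) : f = 0 := by
  have hs : s₀.app A = s₁.app A := (cancel_epi (p.app A)).1 ((hp0 A).trans (hp1 A).symm)
  have hf : s₀.app B ≫ f = s₁.app B ≫ f := s₀.app_comp_map_eq_of_app_eq s₁ f hs
  calc f = (h ≫ s₀.app B) ≫ f := by rw [h0, Category.id_comp]
    _ = (h ≫ s₁.app B) ≫ f := by rw [Category.assoc, hf, Category.assoc]
    _ = 0 := by rw [h1, Limits.zero_comp]
end
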